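/- arXiv:1608.03548 — 2 statements merged into one kernel-verified Lean document; each statement's English description precedes it below -/
import Mathlib

section
/- With notation as above, extend E ℝ-bilinearly to ℂ^d × ℂ^d → ℝ and set H(x,y) = E(ix,y) + iE(x,y). Then H(x,x) = (Im τ)⁻¹ β(x, x̄) for all x ∈ ℂ^d, where β is extended ℂ-bilinearly and x̄ is the componentwise complex conjugate. Consequently, since Im τ > 0, H is positive definite on ℂ^d if and only if β is positive definite on ℝ^d. -/
open Complex

/-- `β(x,y) = Σ cᵢⱼ xᵢ yⱼ` over `ℝ`. -/
def betaR {d : ℕ} (c : Matrix (Fin d) (Fin d) ℝ) (x y : Fin d → ℝ) : ℝ :=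
  ∑ i, ∑ j, c i j * x i * y j

/-- `β` extended `ℂ`-bilinearly. -/
noncomputable def betaC {d : ℕ} (c : Matrix (Fin d) (Fin d) ℝ) (x y : Fin d → ℂ) : ℂ :=
  ∑ i, ∑ j, (c i j : ℂ) * x i * y j

/-- The `ℝ`-bilinear extension of `E` evaluated on `x = uτ + v`, `y = u'τ + v'`:
`E(x,y) = β(u,v') - β(v,u')`. -/
def Eext {d : ℕ} (c : Matrix (Fin d) (Fin d) ℝ) (u v u' v' : Fin d → ℝ) : ℝ :=
  betaR c u v' - betaR c v u'

lemma betaC_re {d : ℕ} (c : Matrix (Fin d) (Fin d) ℝ) (x : Fin d → ℂ) :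
    (betaC c x (fun i => (starRingEnd ℂ) (x i))).re =
      betaR c (fun i => (x i).re) (fun i => (x i).re)
        + betaR c (fun i => (x i).im) (fun i => (x i).im) := by
  simp only [betaC, betaR, Complex.re_sum, ← Finset.sum_add_distrib]
  refine Finset.sum_congr rfl fun i _ => Finset.sum_congr rfl fun j _ => ?_
  simp [Complex.mul_re, Complex.mul_im]

lemma betaR_zero {d : ℕ} (c : Matrix (Fin d) (Fin d) ℝ) (y : Fin d → ℝ) :
    betaR c (fun _ => (0:ℝ)) y = 0 := by
  simp [betaR]

/-- with `H(x,y) = E(ix,y) + iE(x,y)` (E extended `ℝ`-bilinearly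
to `ℂ^d`), one has `H(x,x) = (Im τ)⁻¹ β(x, x̄)`; consequently, since `Im τ > 0`,
`H` is positive definite on `ℂ^d` iff `β` is positive definite on `ℝ^d`. -/
theorem stmt13 {d : ℕ} (c : Matrix (Fin d) (Fin d) ℝ) (hsymm : ∀ i j, c i j = c j i)
    (τ : ℂ) (hτ : 0 < τ.im) :
    (∀ u v u₂ v₂ : Fin d → ℝ,
      (∀ i, Complex.I * ((u i : ℂ) * τ + (v i : ℂ)) = (u₂ i : ℂ) * τ + (v₂ i : ℂ)) →
      ((Eext c u₂ v₂ u v : ℝ) : ℂ) + Complex.I * ((Eext c u v u v : ℝ) : ℂ) =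
        ((τ.im)⁻¹ : ℝ) *
          betaC c (fun i => (u i : ℂ) * τ + (v i : ℂ))
            (fun i => (starRingEnd ℂ) ((u i : ℂ) * τ + (v i : ℂ)))) ∧
    ((∀ x : Fin d → ℂ, x ≠ 0 →
        0 < (((τ.im)⁻¹ : ℝ) * betaC c x (fun i => (starRingEnd ℂ) (x i))).re) ↔
      (∀ w : Fin d → ℝ, w ≠ 0 → 0 < betaR c w w)) := by
  have hb : τ.im ≠ 0 := ne_of_gt hτ
  constructor
  · intro u v u₂ v₂ h
    have h1 : ∀ i, -(u i * τ.im) = u₂ i * τ.re + v₂ i := by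
      intro i
      have := congrArg Complex.re (h i)
      simpa using this
    have h2 : ∀ i, u i * τ.re + v i = u₂ i * τ.im := by
      intro i
      have := congrArg Complex.im (h i)
      simpa using this
    have hre : (betaC c (fun i => (u i : ℂ) * τ + (v i : ℂ))
        (fun i => (starRingEnd ℂ) ((u i : ℂ) * τ + (v i : ℂ)))).re =
        τ.im * Eext c u₂ v₂ u v := by
      simp only [betaC, Eext, betaR, Complex.re_sum, mul_sub, Finset.mul_sum,
        ← Finset.sum_sub_distrib]
      refine Finset.sum_congr rfl fun i _ => Finset.sum_congr rfl fun j _ => ?_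
      simp [Complex.mul_re, Complex.mul_im]
      linear_combination (c i j * v j + c i j * τ.re * u j) * h2 i
        - c i j * u j * τ.im * h1 i
    have him : (betaC c (fun i => (u i : ℂ) * τ + (v i : ℂ))
        (fun i => (starRingEnd ℂ) ((u i : ℂ) * τ + (v i : ℂ)))).im =
        τ.im * Eext c u v u v := by
      simp only [betaC, Eext, betaR, Complex.im_sum, mul_sub, Finset.mul_sum,
        ← Finset.sum_sub_distrib]
      refine Finset.sum_congr rfl fun i _ => Finset.sum_congr rfl fun j _ => ?_
      simp [Complex.mul_re, Complex.mul_im]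
      ring
    have hB : betaC c (fun i => (u i : ℂ) * τ + (v i : ℂ))
        (fun i => (starRingEnd ℂ) ((u i : ℂ) * τ + (v i : ℂ))) =
        ((τ.im * Eext c u₂ v₂ u v : ℝ) : ℂ) + ((τ.im * Eext c u v u v : ℝ) : ℂ) * Complex.I := by
      apply Complex.ext
      · rw [hre]; simp
      · rw [him]; simp
    rw [hB]
    have hbC : (τ.im : ℂ) ≠ 0 := by exact_mod_cast hb
    push_cast
    field_simp
  · constructor
    · intro h w hw
      have hx : (fun i => (w i : ℂ)) ≠ 0 := by
        intro hc
        apply hw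
        funext i
        have := congrFun hc i
        simpa using this
      have h0 := h _ hx
      rw [Complex.mul_re, betaC_re] at h0
      have e1 : betaR c (fun i => ((w i : ℂ)).re) (fun i => ((w i : ℂ)).re) = betaR c w w := by
        simp [betaR]
      have e2 : betaR c (fun i => ((w i : ℂ)).im) (fun i => ((w i : ℂ)).im) = 0 := by
        simp [betaR]
      rw [e1, e2, add_zero] at h0
      simp at h0
      nlinarith [inv_pos.mpr hτ]
    · intro h x hx
      rw [Complex.mul_re]
      simp [betaC_re]
      have hnz : (fun i => (x i).re) ≠ 0 ∨ (fun i => (x i).im) ≠ 0 := by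
        by_contra hc
        push_neg at hc
        apply hx
        funext i
        have h1 := congrFun hc.1 i
        have h2 := congrFun hc.2 i
        simp at h1 h2
        exact Complex.ext (by simpa using h1) (by simpa using h2)
      have key : ∀ w : Fin d → ℝ, 0 ≤ betaR c w w := by
        intro w
        rcases eq_or_ne w 0 with rfl | hw
        · simp [betaR]
        · exact le_of_lt (h w hw)
      have hpos : 0 < betaR c (fun i => (x i).re) (fun i => (x i).re)
          + betaR c (fun i => (x i).im) (fun i => (x i).im) := by
        rcases hnz with hn | hn
        · have := h _ hn
          nlinarith [key (fun i => (x i).im)]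
        · have := h _ hn
          nlinarith [key (fun i => (x i).re)]
      positivity
end

section
/- Let φ : ℤ^d → ℤ be a positive definite quadratic function with Hessian β, let τ ∈ ℂ with Im τ > 0, and let u ∈ ℝ^d satisfy β(u, m) ∈ ℤ for all m ∈ ℤ^d. Then the theta series θ_u(τ,z) = Σ_{v ∈ ℤ^d} exp(2πi(−β(z, u+v) + φ(u+v)τ)) converges absolutely for every z ∈ ℂ^d, and satisfies the functional equation θ_u(τ, z + m₁τ + m₂) = θ_u(τ, z) · exp(2πi(−β(z,m₁) − φ(m₁)τ)) for all m₁, m₂ ∈ ℤ^d. -/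
/-!
Positive definiteness gives `ε Σⱼ wⱼ² ≤ β(w, w)` for some `ε > 0` (minimum of `β(w, w)` on the
unit sphere), while `|Im β(z, w)|` grows only linearly in `w`. Hence each term is dominated by a
product over the coordinates of one-variable Gaussians `n ↦ exp(-b (uⱼ + n)²)`, which are summable.

For the functional equation, expanding the exponent shows that shifting `z` by `m₁τ + m₂` turns the
term of index `v` into the term of index `v - m₁` times `exp(2πi(-β(z, m₁) - φ(m₁)τ))`, up to the
factor `exp(-2πi β(m₂, u + v))`, which is `1` because `β(m₂, u + v) ∈ ℤ`; then reindex the sum.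
-/

open Complex

/-- `β(z,w) = Σ cᵢⱼ zᵢ wⱼ`, extended `ℂ`-bilinearly. -/
noncomputable def betaCC {d : ℕ} (c : Matrix (Fin d) (Fin d) ℤ) (z w : Fin d → ℂ) : ℂ :=
  ∑ i, ∑ j, (c i j : ℂ) * z i * w j

/-- `φ(z) = (1/2) Σ cᵢⱼ zᵢ zⱼ`. -/
noncomputable def phiCC {d : ℕ} (c : Matrix (Fin d) (Fin d) ℤ) (z : Fin d → ℂ) : ℂ :=
  (1 / 2 : ℂ) * betaCC c z z

/-- `β` on real vectors. -/
def betaRR {d : ℕ} (c : Matrix (Fin d) (Fin d) ℤ) (x y : Fin d → ℝ) : ℝ :=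
  ∑ i, ∑ j, (c i j : ℝ) * x i * y j

/-- The general term of the theta series `θ_u(τ,z)`:
`v ↦ exp(2πi(-β(z, u+v) + φ(u+v)τ))`. -/
noncomputable def thetaTerm {d : ℕ} (c : Matrix (Fin d) (Fin d) ℤ)
    (u : Fin d → ℝ) (τ : ℂ) (z : Fin d → ℂ) (v : Fin d → ℤ) : ℂ :=
  Complex.exp (2 * Real.pi * Complex.I *
    (-betaCC c z (fun i => (u i : ℂ) + (v i : ℂ)) +
      phiCC c (fun i => (u i : ℂ) + (v i : ℂ)) * τ))

open Metric in
theorem exists_pos_mul_norm_sq_le {E : Type*} [NormedAddCommGroup E] [NormedSpace ℝ E]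
    [FiniteDimensional ℝ E] {Q : E → ℝ} (hQ : Continuous Q)
    (hQ_smul : ∀ (t : ℝ) (w : E), Q (t • w) = t ^ 2 * Q w) (hQ_pos : ∀ w ≠ 0, 0 < Q w) :
    ∃ ε > 0, ∀ w, ε * ‖w‖ ^ 2 ≤ Q w := by
  have hQ_zero : Q 0 = 0 := by simpa using hQ_smul 0 0
  rcases subsingleton_or_nontrivial E with _ | _
  · exact ⟨1, one_pos, fun w => by simp [Subsingleton.elim w 0, hQ_zero]⟩
  obtain ⟨w₀, hw₀, hmin⟩ := (isCompact_sphere (0 : E) 1).exists_isMinOn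
    (NormedSpace.sphere_nonempty.mpr zero_le_one) hQ.continuousOn
  have hw₀_ne : w₀ ≠ 0 := ne_zero_of_mem_unit_sphere ⟨w₀, hw₀⟩
  refine ⟨Q w₀, hQ_pos w₀ hw₀_ne, fun w => ?_⟩
  rcases eq_or_ne w 0 with rfl | hw
  · simp [hQ_zero]
  have hnorm : ‖w‖ ≠ 0 := norm_ne_zero_iff.mpr hw
  have hunit : ‖w‖⁻¹ • w ∈ sphere (0 : E) 1 := by
    simp [norm_smul, hnorm]
  calc Q w₀ * ‖w‖ ^ 2 ≤ Q (‖w‖⁻¹ • w) * ‖w‖ ^ 2 := by gcongr; exact hmin hunit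
    _ = Q w := by rw [hQ_smul]; field_simp

theorem summable_exp_neg_mul_add_sq {b : ℝ} (hb : 0 < b) (x : ℝ) :
    Summable fun n : ℤ => Real.exp (-b * (x + n) ^ 2) := by
  refine (HurwitzKernelBounds.summable_f_int 0 x (div_pos hb Real.pi_pos)).congr fun n => ?_
  simp only [HurwitzKernelBounds.f_int, pow_zero, one_mul]
  congr 1
  field_simp
  ring

theorem mul_abs_sub_mul_sq_le (a t : ℝ) {b : ℝ} (hb : 0 < b) :
    a * |t| - b * t ^ 2 ≤ a ^ 2 / (2 * b) - b / 2 * t ^ 2 := by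
  have := sq_nonneg (b * |t| - a)
  rw [← sq_abs t]
  field_simp
  nlinarith

theorem summable_prod_apply_of_nonneg {κ : Type*} {d : ℕ} (f : Fin d → κ → ℝ)
    (hf : ∀ i, Summable (f i)) (hf_nonneg : ∀ i n, 0 ≤ f i n) :
    Summable fun v : Fin d → κ => ∏ i, f i (v i) := by
  induction d with
  | zero => exact Summable.of_finite
  | succ d ih =>
    have htail := ih (fun i => f i.succ) (fun i => hf i.succ) (fun i => hf_nonneg i.succ)
    rw [← (Fin.consEquiv fun _ => κ).summable_iff]
    refine ((hf 0).mul_of_nonneg htail (hf_nonneg 0) fun v =>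
      Finset.prod_nonneg fun i _ => hf_nonneg i.succ (v i)).congr fun p => ?_
    simp [Fin.consEquiv, Fin.prod_univ_succ]

section Bilinear

variable {d : ℕ} (c : Matrix (Fin d) (Fin d) ℤ)

theorem betaCC_add_left (z₁ z₂ w : Fin d → ℂ) :
    betaCC c (fun i => z₁ i + z₂ i) w = betaCC c z₁ w + betaCC c z₂ w := by
  simp only [betaCC, ← Finset.sum_add_distrib, mul_add, add_mul]

theorem betaCC_add_right (z w₁ w₂ : Fin d → ℂ) :
    betaCC c z (fun i => w₁ i + w₂ i) = betaCC c z w₁ + betaCC c z w₂ := by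
  simp only [betaCC, ← Finset.sum_add_distrib, mul_add]

theorem betaCC_sub_left (z₁ z₂ w : Fin d → ℂ) :
    betaCC c (fun i => z₁ i - z₂ i) w = betaCC c z₁ w - betaCC c z₂ w := by
  simp only [betaCC, ← Finset.sum_sub_distrib, mul_sub, sub_mul]

theorem betaCC_sub_right (z w₁ w₂ : Fin d → ℂ) :
    betaCC c z (fun i => w₁ i - w₂ i) = betaCC c z w₁ - betaCC c z w₂ := by
  simp only [betaCC, ← Finset.sum_sub_distrib, mul_sub]

theorem betaCC_mul_const_left (a : ℂ) (z w : Fin d → ℂ) :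
    betaCC c (fun i => z i * a) w = a * betaCC c z w := by
  simp only [betaCC, Finset.mul_sum]
  exact Finset.sum_congr rfl fun i _ => Finset.sum_congr rfl fun j _ => by ring

theorem betaCC_comm (hsymm : ∀ i j, c i j = c j i) (z w : Fin d → ℂ) :
    betaCC c z w = betaCC c w z := by
  rw [betaCC, betaCC, Finset.sum_comm]
  exact Finset.sum_congr rfl fun i _ => Finset.sum_congr rfl fun j _ => by rw [hsymm]; ring

theorem betaCC_ofReal (x y : Fin d → ℝ) :
    betaCC c (fun i => (x i : ℂ)) (fun i => (y i : ℂ)) = betaRR c x y := by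
  simp [betaCC, betaRR]

theorem betaCC_intCast (m v : Fin d → ℤ) :
    betaCC c (fun i => (m i : ℂ)) (fun i => (v i : ℂ)) = ((∑ i, ∑ j, c i j * m i * v j : ℤ) : ℂ) := by
  simp [betaCC]

theorem phiCC_sub (hsymm : ∀ i j, c i j = c j i) (w m : Fin d → ℂ) :
    phiCC c (fun i => w i - m i) = phiCC c w - betaCC c m w + phiCC c m := by
  simp only [phiCC, betaCC_sub_left, betaCC_sub_right, betaCC_comm c hsymm w m]
  ring

theorem continuous_betaRR_self : Continuous fun w : Fin d → ℝ => betaRR c w w := by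
  unfold betaRR
  fun_prop

theorem betaRR_smul_self (t : ℝ) (w : Fin d → ℝ) :
    betaRR c (t • w) (t • w) = t ^ 2 * betaRR c w w := by
  simp only [betaRR, Finset.mul_sum, Pi.smul_apply, smul_eq_mul]
  exact Finset.sum_congr rfl fun i _ => Finset.sum_congr rfl fun j _ => by ring

end Bilinear

section Summability

variable {d : ℕ} (c : Matrix (Fin d) (Fin d) ℤ)

theorem exists_pos_mul_sum_sq_le_betaRR (hpos : ∀ w : Fin d → ℝ, w ≠ 0 → 0 < betaRR c w w) :
    ∃ ε > 0, ∀ w : Fin d → ℝ, ε * ∑ j, w j ^ 2 ≤ betaRR c w w := by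
  obtain ⟨ε, hε, hbound⟩ := exists_pos_mul_norm_sq_le (E := EuclideanSpace ℝ (Fin d))
    (Q := fun w => betaRR c w w) ((continuous_betaRR_self c).comp (PiLp.continuous_ofLp 2 _))
    (fun t w => betaRR_smul_self c t w)
    (fun w hw => hpos w fun h => hw (by ext i; simp [h]))
  refine ⟨ε, hε, fun w => ?_⟩
  simpa [EuclideanSpace.real_norm_sq_eq] using hbound (WithLp.toLp 2 w)

theorem norm_thetaTerm (u : Fin d → ℝ) (τ : ℂ) (z : Fin d → ℂ) (v : Fin d → ℤ) :
    ‖thetaTerm c u τ z v‖ = Real.exp (2 * Real.pi * (betaCC c z fun i => ((u i + v i : ℝ) : ℂ)).im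
      - Real.pi * betaRR c (fun i => u i + v i) (fun i => u i + v i) * τ.im) := by
  have hreal : (fun i => (u i : ℂ) + (v i : ℂ)) = fun i => ((u i + v i : ℝ) : ℂ) := by
    push_cast; rfl
  rw [thetaTerm, Complex.norm_exp, phiCC, hreal, betaCC_ofReal]
  simp [Complex.mul_re, Complex.mul_im]
  ring

theorem im_betaCC_ofReal_le (z : Fin d → ℂ) (w : Fin d → ℝ) :
    (betaCC c z fun i => (w i : ℂ)).im ≤ (∑ i, ∑ j, |(c i j : ℝ)| * ‖z i‖) * ∑ j, |w j| := by
  calc (betaCC c z fun i => (w i : ℂ)).im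
      ≤ ∑ i, ∑ j, ‖(c i j : ℂ) * z i * (w j : ℂ)‖ :=
        (Complex.im_le_norm _).trans <|
          (norm_sum_le _ _).trans (Finset.sum_le_sum fun i _ => norm_sum_le _ _)
    _ ≤ ∑ i, ∑ j, |(c i j : ℝ)| * ‖z i‖ * ∑ j', |w j'| := by
        refine Finset.sum_le_sum fun i _ => Finset.sum_le_sum fun j _ => ?_
        rw [norm_mul, norm_mul, Complex.norm_real, Real.norm_eq_abs, Complex.norm_intCast]
        gcongr
        exact Finset.single_le_sum (f := fun j' => |w j'|) (fun j' _ => abs_nonneg _)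
          (Finset.mem_univ j)
    _ = (∑ i, ∑ j, |(c i j : ℝ)| * ‖z i‖) * ∑ j, |w j| := by
        simp only [Finset.sum_mul]

theorem summable_norm_thetaTerm (hpos : ∀ w : Fin d → ℝ, w ≠ 0 → 0 < betaRR c w w)
    {τ : ℂ} (hτ : 0 < τ.im) (u : Fin d → ℝ) (z : Fin d → ℂ) :
    Summable fun v : Fin d → ℤ => ‖thetaTerm c u τ z v‖ := by
  obtain ⟨ε, hε, hcoercive⟩ := exists_pos_mul_sum_sq_le_betaRR c hpos
  set a := 2 * Real.pi * ∑ i, ∑ j, |(c i j : ℝ)| * ‖z i‖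
  set b := Real.pi * τ.im * ε
  have hb : 0 < b := by positivity
  set g : ℝ → ℝ := fun t => Real.exp (a ^ 2 / (2 * b)) * Real.exp (-(b / 2) * t ^ 2)
  refine Summable.of_nonneg_of_le (fun v => norm_nonneg _) (fun v => ?_)
    (summable_prod_apply_of_nonneg (fun j (n : ℤ) => g (u j + n))
      (fun j => (summable_exp_neg_mul_add_sq (half_pos hb) (u j)).mul_left _)
      (fun j n => by positivity))
  set w : Fin d → ℝ := fun i => u i + v i
  have him := im_betaCC_ofReal_le c z w
  have hquad := hcoercive w
  have hexponent : 2 * Real.pi * (betaCC c z fun i => (w i : ℂ)).im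
      - Real.pi * betaRR c w w * τ.im ≤ ∑ j, (a * |w j| - b * w j ^ 2) := by
    rw [Finset.sum_sub_distrib, ← Finset.mul_sum, ← Finset.mul_sum]
    have := mul_le_mul_of_nonneg_left him (by positivity : (0 : ℝ) ≤ 2 * Real.pi)
    have := mul_le_mul_of_nonneg_left hquad (by positivity : (0 : ℝ) ≤ Real.pi * τ.im)
    nlinarith
  calc ‖thetaTerm c u τ z v‖
      ≤ Real.exp (∑ j, (a ^ 2 / (2 * b) - b / 2 * w j ^ 2)) := by
        rw [norm_thetaTerm, Real.exp_le_exp]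
        exact hexponent.trans (Finset.sum_le_sum fun j _ => mul_abs_sub_mul_sq_le a (w j) hb)
    _ = ∏ j, g (u j + v j) := by
        rw [Real.exp_sum]
        refine Finset.prod_congr rfl fun j _ => ?_
        simp only [g, w, ← Real.exp_add]
        ring_nf

end Summability

section FunctionalEquation

variable {d : ℕ} (c : Matrix (Fin d) (Fin d) ℤ) {u : Fin d → ℝ}

theorem exists_betaCC_intCast_add_eq_intCast (hsymm : ∀ i j, c i j = c j i)
    (hu : ∀ m : Fin d → ℤ, ∃ k : ℤ, betaRR c u (fun i => (m i : ℝ)) = k) (m v : Fin d → ℤ) :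
    ∃ k : ℤ, betaCC c (fun i => (m i : ℂ)) (fun i => (u i : ℂ) + (v i : ℂ)) = k := by
  obtain ⟨k, hk⟩ := hu m
  refine ⟨k + ∑ i, ∑ j, c i j * m i * v j, ?_⟩
  have hu_m : betaCC c (fun i => (u i : ℂ)) (fun i => (m i : ℂ)) = k := by
    exact_mod_cast (betaCC_ofReal c u fun i => (m i : ℝ)).trans (congrArg _ hk)
  rw [betaCC_add_right, betaCC_comm c hsymm _ (fun i => (u i : ℂ)), hu_m, betaCC_intCast]
  push_cast
  ring

theorem thetaTerm_add_mul_add (hsymm : ∀ i j, c i j = c j i)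
    (hu : ∀ m : Fin d → ℤ, ∃ k : ℤ, betaRR c u (fun i => (m i : ℝ)) = k) (τ : ℂ) (z : Fin d → ℂ) (m₁ m₂ v : Fin d → ℤ) :
    thetaTerm c u τ (fun i => z i + (m₁ i : ℂ) * τ + (m₂ i : ℂ)) v =
      thetaTerm c u τ z (v - m₁) * Complex.exp (2 * Real.pi * Complex.I *
        (-betaCC c z (fun i => (m₁ i : ℂ)) - phiCC c (fun i => (m₁ i : ℂ)) * τ)) := by
  obtain ⟨k, hk⟩ := exists_betaCC_intCast_add_eq_intCast c hsymm hu m₂ v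
  set W : Fin d → ℂ := fun i => (u i : ℂ) + (v i : ℂ)
  set M : Fin d → ℂ := fun i => (m₁ i : ℂ)
  have hW_sub : (fun i => (u i : ℂ) + (((v - m₁) i : ℤ) : ℂ)) = fun i => W i - M i := by
    funext i
    simp only [W, M, Pi.sub_apply, Int.cast_sub]
    ring
  have hshift : betaCC c (fun i => z i + M i * τ + (m₂ i : ℂ)) W
      = betaCC c z W + τ * betaCC c M W + k := by
    rw [betaCC_add_left, betaCC_add_left, betaCC_mul_const_left, hk]
  -- `k = β(m₂, u + v)` is an integer, so the extra term `-2πik` is invisible to `exp`.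
  have hexponent : 2 * Real.pi * Complex.I *
        (-betaCC c (fun i => z i + M i * τ + (m₂ i : ℂ)) W + phiCC c W * τ)
      = 2 * Real.pi * Complex.I *
          (-betaCC c z (fun i => W i - M i) + phiCC c (fun i => W i - M i) * τ)
        + 2 * Real.pi * Complex.I * (-betaCC c z M - phiCC c M * τ)
        + (-k : ℤ) * (2 * Real.pi * Complex.I) := by
    rw [hshift, betaCC_sub_right, phiCC_sub c hsymm]
    push_cast
    ring
  rw [thetaTerm, thetaTerm, hW_sub, hexponent, Complex.exp_add, Complex.exp_add,
    Complex.exp_int_mul_two_pi_mul_I, mul_one]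

theorem tsum_thetaTerm_add_mul_add (hsymm : ∀ i j, c i j = c j i)
    (hu : ∀ m : Fin d → ℤ, ∃ k : ℤ, betaRR c u (fun i => (m i : ℝ)) = k) (τ : ℂ) (z : Fin d → ℂ) (m₁ m₂ : Fin d → ℤ) :
    ∑' v, thetaTerm c u τ (fun i => z i + (m₁ i : ℂ) * τ + (m₂ i : ℂ)) v =
      (∑' v, thetaTerm c u τ z v) * Complex.exp (2 * Real.pi * Complex.I *
        (-betaCC c z (fun i => (m₁ i : ℂ)) - phiCC c (fun i => (m₁ i : ℂ)) * τ)) := by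
  simp only [thetaTerm_add_mul_add c hsymm hu, tsum_mul_right]
  congr 1
  exact (Equiv.subRight m₁).tsum_eq (thetaTerm c u τ z)

end FunctionalEquation

theorem stmt19_general {d : ℕ} (c : Matrix (Fin d) (Fin d) ℤ)
    (hsymm : ∀ i j, c i j = c j i)
    (hpos : ∀ w : Fin d → ℝ, w ≠ 0 → 0 < betaRR c w w)
    (τ : ℂ) (hτ : 0 < τ.im)
    (u : Fin d → ℝ) (hu : ∀ m : Fin d → ℤ, ∃ k : ℤ, betaRR c u (fun i => (m i : ℝ)) = k) :
    (∀ z : Fin d → ℂ, Summable (fun v : Fin d → ℤ => ‖thetaTerm c u τ z v‖)) ∧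
    (∀ (z : Fin d → ℂ) (m₁ m₂ : Fin d → ℤ),
      (∑' v : Fin d → ℤ, thetaTerm c u τ (fun i => z i + (m₁ i : ℂ) * τ + (m₂ i : ℂ)) v) =
        (∑' v : Fin d → ℤ, thetaTerm c u τ z v) *
          Complex.exp (2 * Real.pi * Complex.I *
            (-betaCC c z (fun i => (m₁ i : ℂ)) - phiCC c (fun i => (m₁ i : ℂ)) * τ))) :=
  ⟨summable_norm_thetaTerm c hpos hτ u, tsum_thetaTerm_add_mul_add c hsymm hu τ⟩

/-- for `φ` positive definite (symmetric integer Hessian matrix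
with even diagonal), `Im τ > 0`, and `u ∈ ℝ^d` with `β(u, m) ∈ ℤ` for all
`m ∈ ℤ^d`, the theta series `θ_u(τ,z) = Σ_{v ∈ ℤ^d} exp(2πi(-β(z,u+v) + φ(u+v)τ))`
converges absolutely for each `z` and satisfies
`θ_u(τ, z + m₁τ + m₂) = θ_u(τ,z) · exp(2πi(-β(z,m₁) - φ(m₁)τ))`. -/
theorem stmt19 {d : ℕ} (c : Matrix (Fin d) (Fin d) ℤ)
    (hsymm : ∀ i j, c i j = c j i) (heven : ∀ i, 2 ∣ c i i)
    (hpos : ∀ w : Fin d → ℝ, w ≠ 0 → 0 < betaRR c w w)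
    (τ : ℂ) (hτ : 0 < τ.im)
    (u : Fin d → ℝ) (hu : ∀ m : Fin d → ℤ, ∃ k : ℤ, betaRR c u (fun i => (m i : ℝ)) = k) :
    (∀ z : Fin d → ℂ, Summable (fun v : Fin d → ℤ => ‖thetaTerm c u τ z v‖)) ∧
    (∀ (z : Fin d → ℂ) (m₁ m₂ : Fin d → ℤ),
      (∑' v : Fin d → ℤ, thetaTerm c u τ (fun i => z i + (m₁ i : ℂ) * τ + (m₂ i : ℂ)) v) =
        (∑' v : Fin d → ℤ, thetaTerm c u τ z v) *
          Complex.exp (2 * Real.pi * Complex.I *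
            (-betaCC c z (fun i => (m₁ i : ℂ)) - phiCC c (fun i => (m₁ i : ℂ)) * τ))) :=
  stmt19_general c hsymm hpos τ hτ u hu
end
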